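/- Let κ̄ ∈ (1,e) be the solution of κ(1 − log κ) = 1/2 in (1,e). For every real x ≥ e, one has li̅(x) − li_*(x) ≤ li_1(x) − li_*(x) ≤ D̄ · √(x/log x), where D̄ = ((κ̄ + 3)/(κ̄ − 1))·√(2π/κ̄)·e^(13/12). -/

import Mathlib

/-- The Stieltjes asymptotic approximation of `li(x)`:
`li_*(x) = (x/log x)·Σ_{k=0}^{n−1} k!/(log x)^k + (log x − n)·x·n!/(log x)^(n+1)`
with `n = ⌊log x⌋`. -/
noncomputable def liStar (x : ℝ) : ℝ :=
  x / Real.log x *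
      ∑ k ∈ Finset.range ⌊Real.log x⌋₊, (Nat.factorial k : ℝ) / Real.log x ^ k
    + (Real.log x - ⌊Real.log x⌋₊) * x * (Nat.factorial ⌊Real.log x⌋₊ : ℝ)
      / Real.log x ^ (⌊Real.log x⌋₊ + 1)

/-- The truncated asymptotic approximation of `li(x)` with truncation parameter `κ`
and fractional coefficient `α`:
`li_{κ,α}(x) = (x/log x)·(α·m!/(log x)^m + Σ_{k=0}^{m−1} k!/(log x)^k)` with
`m = ⌊κ·log x⌋`. -/
noncomputable def liApprox (κ α x : ℝ) : ℝ :=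
  x / Real.log x *
    (α * (Nat.factorial ⌊κ * Real.log x⌋₊ : ℝ) / Real.log x ^ ⌊κ * Real.log x⌋₊
      + ∑ k ∈ Finset.range ⌊κ * Real.log x⌋₊, (Nat.factorial k : ℝ) / Real.log x ^ k)

/-!
Write `L = log x`, `n = ⌊L⌋` and `m = ⌊κ̄ L⌋`. The first inequality holds because `ᾱ < 1`.
For the second, `li₁(x) − li_*(x) ≤ (x/L) ∑_{n ≤ k ≤ m} k!/L^k`, and the upper Stirling bound
`k! ≤ e √k (k/e)^k` gives `k!/L^k ≤ e √k exp φ(k)` with `φ(t) = t log t − t (1 + log L)`.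
Since `φ` is convex, on `[n, cL]` it is at most `max (φ n) (φ (cL))`, where `φ n ≤ −4L/5` and
`φ (cL) = −c (1 − log c) L`. The defining equation of `κ̄` gives `φ (κ̄L) = −L/2`, so the
term `k = m` is `O(√L e^{−L/2})`. Taking `c = 8/5`, the `O(L)` terms with `k < 8L/5` are
`O(√L e^{−4L/5})` each, while above `8L/5` consecutive terms grow by a factor `≥ 8/5`, so these
sum to at most `8/3` times the term `k = m`. Hence the sum is at most `(14/3) e √(κ̄L) e^{−L/2}`,
and `(x/L) √L e^{−L/2} = √(x/L)`. Finally `8/5 ≤ κ̄ ≤ 9/4`, which suffices for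
`(14/3) e √κ̄ ≤ D̄`.
-/

open Real Finset
open scoped Nat

theorem factorial_le_exp_one_mul_sqrt_mul_pow {k : ℕ} (hk : k ≠ 0) :
    (k ! : ℝ) ≤ exp 1 * √k * (k / exp 1) ^ k := by
  obtain ⟨j, rfl⟩ : ∃ j, k = j + 1 := ⟨k - 1, by omega⟩
  have h := Stirling.stirlingSeq'_antitone (Nat.zero_le j)
  simp only [Function.comp_apply, Nat.succ_eq_add_one, zero_add, Stirling.stirlingSeq_one] at h
  rw [Stirling.stirlingSeq, div_le_div_iff₀ (by positivity) (by positivity),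
    Real.sqrt_mul zero_le_two] at h
  nlinarith [Real.sqrt_pos.2 (zero_lt_two' ℝ)]

theorem sum_Ico_le_div_one_sub_of_le_mul {a : ℕ → ℝ} {r : ℝ} {s m : ℕ} (ha : ∀ k, 0 ≤ a k)
    (hr0 : 0 ≤ r) (hr1 : r < 1) (hrat : ∀ k, s ≤ k → a k ≤ r * a (k + 1)) :
    ∑ k ∈ Ico s (m + 1), a k ≤ a m / (1 - r) := by
  rw [le_div_iff₀ (by linarith)]
  rcases le_or_gt s m with hsm | hms
  · have hlow : ∑ k ∈ Ico s m, a k ≤ r * ∑ k ∈ Ico s (m + 1), a k :=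
      calc ∑ k ∈ Ico s m, a k ≤ ∑ k ∈ Ico s m, r * a (k + 1) :=
            sum_le_sum fun k hk => hrat k (mem_Ico.1 hk).1
        _ = r * ∑ k ∈ Ico (s + 1) (m + 1), a k := by rw [← mul_sum, sum_Ico_add' a]
        _ ≤ r * ∑ k ∈ Ico s (m + 1), a k := by
            gcongr ?_ * ?_
            exact sum_le_sum_of_subset_of_nonneg (Ico_subset_Ico_left s.le_succ)
              fun k _ _ => ha k
    rw [sum_Ico_succ_top hsm] at hlow ⊢
    nlinarith
  · rw [Ico_eq_empty (by omega), sum_empty, zero_mul]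
    exact ha m

theorem mul_one_sub_log_antitoneOn : AntitoneOn (fun t => t * (1 - log t)) (Set.Ici 1) := by
  intro a ha b hb hab
  simp only [Set.mem_Ici] at ha hb
  have hlog : b * (log a - log b) ≤ a - b := by
    rw [← Real.log_div (by linarith) (by linarith)]
    have := Real.log_le_sub_one_of_pos (show 0 < a / b by positivity)
    calc b * log (a / b) ≤ b * (a / b - 1) := by gcongr
      _ = a - b := by field_simp
  nlinarith [Real.log_nonneg ha]

theorem mem_Icc_of_mul_one_sub_log_eq_half {κ : ℝ} (hκ : 1 ≤ κ) (h : κ * (1 - log κ) = 1 / 2) :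
    κ ∈ Set.Icc (8 / 5) (9 / 4) := by
  constructor
  · by_contra! hlt
    have hanti : 8 / 5 * (1 - log (8 / 5)) ≤ κ * (1 - log κ) :=
      mul_one_sub_log_antitoneOn hκ (by norm_num : (1 : ℝ) ≤ 8 / 5) hlt.le
    linarith [Real.log_le_sub_one_of_pos (show (0 : ℝ) < 8 / 5 by norm_num)]
  · by_contra! hlt
    have hanti : κ * (1 - log κ) ≤ 9 / 4 * (1 - log (9 / 4)) :=
      mul_one_sub_log_antitoneOn (by norm_num : (1 : ℝ) ≤ 9 / 4) hκ hlt.le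
    have hlog : log (9 / 4) = log 2 + log (9 / 8) := by
      rw [← Real.log_mul (by norm_num) (by norm_num)]; norm_num
    linarith [Real.one_sub_inv_le_log_of_pos (show (0 : ℝ) < 9 / 8 by norm_num),
      Real.log_two_gt_d9]

/-- `log ((t / (e * L)) ^ t)`. -/
noncomputable def stirlingExponent (L t : ℝ) : ℝ := t * log t - t * (1 + log L)

theorem factorial_div_pow_le {L : ℝ} (hL : 0 < L) {k : ℕ} (hk : k ≠ 0) :
    (k ! : ℝ) / L ^ k ≤ exp 1 * √k * exp (stirlingExponent L k) := by
  have hk0 : (0 : ℝ) < k := by positivity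
  have hpow : ((k : ℝ) / exp 1) ^ k / L ^ k = exp (stirlingExponent L k) := by
    rw [stirlingExponent, ← mul_sub, Real.exp_nat_mul, Real.exp_sub, Real.exp_add,
      Real.exp_log hk0, Real.exp_log hL, div_pow, div_pow, mul_pow, div_div]
  calc (k ! : ℝ) / L ^ k ≤ exp 1 * √k * (k / exp 1) ^ k / L ^ k := by
        gcongr; exact factorial_le_exp_one_mul_sqrt_mul_pow hk
    _ = _ := by rw [mul_div_assoc, hpow]

theorem stirlingExponent_le_max {L a b t : ℝ} (ha : 0 ≤ a) (ht : t ∈ Set.Icc a b) :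
    stirlingExponent L t ≤ max (stirlingExponent L a) (stirlingExponent L b) := by
  have hconv : ConvexOn ℝ (Set.Ici 0) (stirlingExponent L) :=
    Real.convexOn_mul_log.sub
      (((LinearMap.lsmul ℝ ℝ).flip (1 + log L)).concaveOn (convex_Ici 0))
  exact hconv.le_max_of_mem_Icc ha (ha.trans (ht.1.trans ht.2)) ht

theorem stirlingExponent_floor_le {L : ℝ} (hL : 1 ≤ L) :
    stirlingExponent L ⌊L⌋₊ ≤ -(4 / 5 * L) := by
  set n := ⌊L⌋₊
  have hnL : (n : ℝ) ≤ L := Nat.floor_le (by linarith)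
  have hLn : L < n + 1 := Nat.lt_floor_add_one L
  have hn1 : 1 ≤ n := Nat.le_floor (by exact_mod_cast hL)
  rcases hn1.eq_or_lt with hn | hn2
  · rw [← hn] at hLn ⊢
    have hconc : ConcaveOn ℝ (Set.Ioi 0) (fun t => log t - 4 / 5 * t) :=
      strictConcaveOn_log_Ioi.concaveOn.sub
        (((LinearMap.lsmul ℝ ℝ) (4 / 5)).convexOn (convex_Ioi 0))
    have hmin := hconc.min_le_of_mem_Icc (x := 1) (y := 2)
      (Set.mem_Ioi.2 one_pos) (Set.mem_Ioi.2 two_pos) ⟨hL, by push_cast at hLn; linarith⟩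
    simp only [Real.log_one] at hmin
    have hlogL : -1 ≤ log L - 4 / 5 * L :=
      (le_min (by norm_num) (by linarith [Real.log_two_gt_d9])).trans hmin
    simp only [stirlingExponent, Nat.cast_one, Real.log_one]
    linarith
  · have hn2 : (2 : ℝ) ≤ n := by exact_mod_cast hn2
    have hlog : log n - log L ≤ n / L - 1 := by
      rw [← Real.log_div (by linarith) (by linarith)]
      exact Real.log_le_sub_one_of_pos (by positivity)
    have hquad : (n : ℝ) * (n / L) ≤ 2 * n - 4 / 5 * L := by
      rw [← mul_div_assoc, div_le_iff₀ (by linarith)]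
      nlinarith
    have : stirlingExponent L n = n * (log n - log L) - n := by
      simp only [stirlingExponent]; ring
    rw [this]
    nlinarith

theorem stirlingExponent_le {L c δ t : ℝ} (hL : 1 ≤ L) (hc : 0 < c) (hδ : δ ≤ 4 / 5)
    (hδc : δ ≤ c * (1 - log c)) (ht : t ∈ Set.Icc (⌊L⌋₊ : ℝ) (c * L)) :
    stirlingExponent L t ≤ -(δ * L) := by
  refine (stirlingExponent_le_max (Nat.cast_nonneg _) ht).trans (max_le ?_ ?_)
  · nlinarith [stirlingExponent_floor_le hL]
  · have : stirlingExponent L (c * L) = -(c * (1 - log c) * L) := by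
      rw [stirlingExponent, Real.log_mul hc.ne' (by linarith)]; ring
    rw [this]
    nlinarith

theorem factorial_div_pow_le_exp_neg {L c δ : ℝ} (hL : 1 ≤ L) (hc : 0 < c) (hδ : δ ≤ 4 / 5)
    (hδc : δ ≤ c * (1 - log c)) {k : ℕ} (hnk : ⌊L⌋₊ ≤ k) (hk : (k : ℝ) ≤ c * L) :
    (k ! : ℝ) / L ^ k ≤ exp 1 * √(c * L) * exp (-(δ * L)) := by
  have hk0 : k ≠ 0 := (Nat.lt_of_lt_of_le (Nat.floor_pos.2 hL) hnk).ne'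
  calc (k ! : ℝ) / L ^ k ≤ exp 1 * √k * exp (stirlingExponent L k) :=
        factorial_div_pow_le (by linarith) hk0
    _ ≤ exp 1 * √(c * L) * exp (-(δ * L)) := by
        gcongr
        exact stirlingExponent_le hL hc hδ hδc ⟨by exact_mod_cast hnk, hk⟩

theorem sum_Ico_factorial_div_pow_le {L r : ℝ} {s : ℕ} (hL : 0 < L) (hr1 : r < 1)
    (hs : L ≤ r * s) (m : ℕ) :
    ∑ k ∈ Ico s (m + 1), (k ! : ℝ) / L ^ k ≤ m ! / L ^ m / (1 - r) := by
  have hr0 : 0 ≤ r := (pos_of_mul_pos_left (hL.trans_le hs) (Nat.cast_nonneg s)).le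
  refine sum_Ico_le_div_one_sub_of_le_mul (fun k => by positivity) hr0 hr1 fun k hks => ?_
  have hk : L ≤ r * (k + 1) := hs.trans (by gcongr; exact_mod_cast hks.trans k.le_succ)
  calc (k ! : ℝ) / L ^ k = L / (k + 1) * ((k + 1) ! / L ^ (k + 1)) := by
        rw [Nat.factorial_succ]; push_cast; field_simp; ring
    _ ≤ r * ((k + 1) ! / L ^ (k + 1)) := by
        gcongr; rwa [div_le_iff₀ (by positivity)]

theorem sum_factorial_div_pow_below_ceil_le {L κ : ℝ} (hL : 1 ≤ L) (hκ : 8 / 5 ≤ κ) :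
    ∑ k ∈ Ico ⌊L⌋₊ ⌈8 / 5 * L⌉₊, (k ! : ℝ) / L ^ k ≤
      2 * (exp 1 * √(κ * L) * exp (-(L / 2))) := by
  have hlog : log (8 / 5) ≤ 1 / 2 := by
    rw [Real.log_le_iff_le_exp (by norm_num)]
    linarith [Real.quadratic_le_exp_of_nonneg (x := 1 / 2) (by norm_num)]
  have hterm : ∀ k ∈ Ico ⌊L⌋₊ ⌈8 / 5 * L⌉₊,
      (k ! : ℝ) / L ^ k ≤ exp 1 * √(κ * L) * exp (-(4 / 5 * L)) := by
    intro k hk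
    obtain ⟨hnk, hks⟩ := mem_Ico.1 hk
    have hks : (k : ℝ) < 8 / 5 * L := Nat.lt_ceil.1 hks
    refine (factorial_div_pow_le_exp_neg hL (c := 8 / 5) (by norm_num) le_rfl
      (by nlinarith) hnk hks.le).trans ?_
    gcongr
  have hcard : ((⌈8 / 5 * L⌉₊ - ⌊L⌋₊ : ℕ) : ℝ) ≤ 3 / 5 * L + 2 := by
    have hceil := Nat.ceil_lt_add_one (by linarith : (0 : ℝ) ≤ 8 / 5 * L)
    have hfloor := Nat.lt_floor_add_one L
    have hle : ⌊L⌋₊ ≤ ⌈8 / 5 * L⌉₊ :=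
      Nat.cast_le.1 ((Nat.floor_le (by linarith)).trans
        ((by linarith : L ≤ 8 / 5 * L).trans (Nat.le_ceil _)))
    rw [Nat.cast_sub hle]
    linarith
  -- `3L/10 + 1 ≤ exp (3L/10)` pays for the length of the range with the gap `4/5 − 1/2`.
  have hexp : (3 / 5 * L + 2) * exp (-(4 / 5 * L)) ≤ 2 * exp (-(L / 2)) := by
    have := Real.add_one_le_exp (3 / 10 * L)
    calc (3 / 5 * L + 2) * exp (-(4 / 5 * L)) ≤ 2 * exp (3 / 10 * L) * exp (-(4 / 5 * L)) := by
          gcongr; linarith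
      _ = 2 * exp (-(L / 2)) := by rw [mul_assoc, ← Real.exp_add]; ring_nf
  calc ∑ k ∈ Ico ⌊L⌋₊ ⌈8 / 5 * L⌉₊, (k ! : ℝ) / L ^ k
      ≤ (Ico ⌊L⌋₊ ⌈8 / 5 * L⌉₊).card • (exp 1 * √(κ * L) * exp (-(4 / 5 * L))) :=
        sum_le_card_nsmul _ _ _ hterm
    _ ≤ (3 / 5 * L + 2) * (exp 1 * √(κ * L) * exp (-(4 / 5 * L))) := by
        rw [Nat.card_Ico, nsmul_eq_mul]; gcongr
    _ ≤ 2 * (exp 1 * √(κ * L) * exp (-(L / 2))) := by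
        nlinarith [mul_le_mul_of_nonneg_left hexp (by positivity : 0 ≤ exp 1 * √(κ * L))]

theorem sum_factorial_div_pow_from_ceil_le {L κ : ℝ} (hL : 1 ≤ L) (hκ : 1 ≤ κ)
    (hκsol : 1 / 2 ≤ κ * (1 - log κ)) :
    ∑ k ∈ Ico ⌈8 / 5 * L⌉₊ (⌊κ * L⌋₊ + 1), (k ! : ℝ) / L ^ k ≤
      8 / 3 * (exp 1 * √(κ * L) * exp (-(L / 2))) := by
  have hs : L ≤ 5 / 8 * (⌈8 / 5 * L⌉₊ : ℝ) := by linarith [Nat.le_ceil (8 / 5 * L)]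
  have htop := factorial_div_pow_le_exp_neg hL (by linarith) (by norm_num) hκsol
    (Nat.floor_mono (by nlinarith)) (Nat.floor_le (by nlinarith))
  calc _ ≤ (⌊κ * L⌋₊ ! : ℝ) / L ^ ⌊κ * L⌋₊ / (1 - 5 / 8) :=
        sum_Ico_factorial_div_pow_le (by linarith) (by norm_num) hs _
    _ = 8 / 3 * ((⌊κ * L⌋₊ ! : ℝ) / L ^ ⌊κ * L⌋₊) := by ring
    _ ≤ _ := by rw [show -(L / 2) = -(1 / 2 * L) by ring]; gcongr

theorem sum_factorial_div_pow_le {L κ : ℝ} (hL : 1 ≤ L) (hκ : 8 / 5 ≤ κ)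
    (hκsol : 1 / 2 ≤ κ * (1 - log κ)) :
    ∑ k ∈ Ico ⌊L⌋₊ (⌊κ * L⌋₊ + 1), (k ! : ℝ) / L ^ k ≤
      14 / 3 * (exp 1 * √(κ * L) * exp (-(L / 2))) := by
  set s := ⌈8 / 5 * L⌉₊
  calc ∑ k ∈ Ico ⌊L⌋₊ (⌊κ * L⌋₊ + 1), (k ! : ℝ) / L ^ k
      ≤ ∑ k ∈ Ico ⌊L⌋₊ s ∪ Ico s (⌊κ * L⌋₊ + 1), (k ! : ℝ) / L ^ k :=
        sum_le_sum_of_subset_of_nonneg Ico_subset_Ico_union_Ico fun k _ _ => by positivity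
    _ = ∑ k ∈ Ico ⌊L⌋₊ s, (k ! : ℝ) / L ^ k + ∑ k ∈ Ico s (⌊κ * L⌋₊ + 1), (k ! : ℝ) / L ^ k :=
        sum_union (Ico_disjoint_Ico_consecutive _ _ _)
    _ ≤ _ := by
        linarith [sum_factorial_div_pow_below_ceil_le hL hκ,
          sum_factorial_div_pow_from_ceil_le hL (by linarith) hκsol]

theorem liApprox_le_liApprox {κ α β x : ℝ} (hx : 1 ≤ x) (hαβ : α ≤ β) :
    liApprox κ α x ≤ liApprox κ β x := by
  have hlog := Real.log_nonneg hx
  unfold liApprox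
  gcongr

theorem liApprox_one_sub_liStar_le {κ x : ℝ} (hκ : 1 ≤ κ) (hx : 1 ≤ x) :
    liApprox κ 1 x - liStar x ≤
      x / log x * ∑ k ∈ Ico ⌊log x⌋₊ (⌊κ * log x⌋₊ + 1), (k ! : ℝ) / log x ^ k := by
  have hlog := Real.log_nonneg hx
  have hnm : ⌊log x⌋₊ ≤ ⌊κ * log x⌋₊ := Nat.floor_mono (by nlinarith)
  have hfrac : 0 ≤ log x - ⌊log x⌋₊ := sub_nonneg.2 (Nat.floor_le hlog)
  calc liApprox κ 1 x - liStar x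
      = x / log x * ∑ k ∈ Ico ⌊log x⌋₊ (⌊κ * log x⌋₊ + 1), (k ! : ℝ) / log x ^ k
        - (log x - ⌊log x⌋₊) * x * (⌊log x⌋₊ ! : ℝ) / log x ^ (⌊log x⌋₊ + 1) := by
        unfold liApprox liStar
        rw [sum_Ico_succ_top hnm, ← sum_range_add_sum_Ico _ hnm]
        ring
    _ ≤ _ := sub_le_self _ (by positivity)

theorem div_log_mul_sqrt_mul_exp_neg_half {κ x : ℝ} (hκ : 0 ≤ κ) (hx : 1 < x) :
    x / log x * (√(κ * log x) * exp (-(log x / 2))) = √κ * √(x / log x) := by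
  have hx0 : 0 < x := by linarith
  have hlog : 0 < log x := Real.log_pos hx
  have hsqrt : exp (log x / 2) = √x := by
    rw [← Real.sqrt_sq (Real.exp_pos _).le, ← Real.exp_nat_mul, Nat.cast_two,
      mul_div_cancel₀ _ two_ne_zero, Real.exp_log hx0]
  rw [Real.exp_neg, hsqrt, Real.sqrt_mul hκ, Real.sqrt_div' _ hlog.le]
  field_simp
  rw [Real.sq_sqrt hx0.le, Real.sq_sqrt hlog.le]
  ring

theorem fourteen_div_three_mul_exp_one_mul_sqrt_le {κ : ℝ} (hκ : κ ∈ Set.Ioc 1 (9 / 4)) :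
    14 / 3 * exp 1 * √κ ≤ (κ + 3) / (κ - 1) * (√(2 * π / κ) * exp (13 / 12)) := by
  obtain ⟨h1, h2⟩ := hκ
  have hqq := Real.mul_self_sqrt (by linarith : 0 ≤ κ)
  have hpi : 5 / 2 ≤ √(2 * π) := Real.le_sqrt_of_sq_le (by nlinarith [Real.pi_gt_d2])
  have he : exp 1 ≤ exp (13 / 12) := Real.exp_le_exp.2 (by norm_num)
  have hkey : 14 / 3 * (√κ * √κ) * (κ - 1) ≤ 5 / 2 * (κ + 3) := by rw [hqq]; nlinarith
  rw [Real.sqrt_div' _ (by linarith)]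
  calc 14 / 3 * exp 1 * √κ = 14 / 3 * (√κ * √κ) * (κ - 1) * exp 1 / ((κ - 1) * √κ) := by
        field_simp
    _ ≤ 5 / 2 * (κ + 3) * exp (13 / 12) / ((κ - 1) * √κ) := by gcongr
    _ ≤ √(2 * π) * (κ + 3) * exp (13 / 12) / ((κ - 1) * √κ) := by gcongr
    _ = _ := by field_simp

theorem li1_sub_liStar_le_general (κ : ℝ) (hκ1 : 1 < κ)
    (hsol : κ * (1 - Real.log κ) = 1 / 2) (x : ℝ) (hx : Real.exp 1 ≤ x) :
    liApprox κ (κ * Real.log x - ⌊κ * Real.log x⌋₊) x - liStar x ≤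
        liApprox κ 1 x - liStar x ∧
      liApprox κ 1 x - liStar x ≤
        (κ + 3) / (κ - 1) * (Real.sqrt (2 * Real.pi / κ) * Real.exp (13 / 12))
          * Real.sqrt (x / Real.log x) := by
  have hx1 : 1 < x := (Real.one_lt_exp_iff.2 one_pos).trans_le hx
  have hL : 1 ≤ log x := (Real.le_log_iff_exp_le (by linarith)).2 hx
  obtain ⟨hκ8, hκ9⟩ := mem_Icc_of_mul_one_sub_log_eq_half hκ1.le hsol
  refine ⟨sub_le_sub_right (liApprox_le_liApprox hx1.le ?_) _, ?_⟩
  · linarith [Nat.lt_floor_add_one (κ * log x)]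
  calc liApprox κ 1 x - liStar x
      ≤ x / log x * ∑ k ∈ Ico ⌊log x⌋₊ (⌊κ * log x⌋₊ + 1), (k ! : ℝ) / log x ^ k :=
        liApprox_one_sub_liStar_le hκ1.le hx1.le
    _ ≤ x / log x * (14 / 3 * (exp 1 * √(κ * log x) * exp (-(log x / 2)))) := by
        gcongr
        exact sum_factorial_div_pow_le hL hκ8 hsol.ge
    _ = 14 / 3 * exp 1 * (x / log x * (√(κ * log x) * exp (-(log x / 2)))) := by ring
    _ = 14 / 3 * exp 1 * √κ * √(x / log x) := by
        rw [div_log_mul_sqrt_mul_exp_neg_half (by linarith) hx1]; ring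
    _ ≤ _ := mul_le_mul_of_nonneg_right
        (fourteen_div_three_mul_exp_one_mul_sqrt_le ⟨hκ1, hκ9⟩) (Real.sqrt_nonneg _)

/-- With `κ̄ ∈ (1,e)` the solution of `κ(1−log κ) = 1/2`, for every
real `x ≥ e`: `li̅(x) − li_*(x) ≤ li₁(x) − li_*(x) ≤ D̄·√(x/log x)` where
`li̅(x) = li_{κ̄,ᾱ}(x)`, `li₁(x) = li_{κ̄,1}(x)`, and
`D̄ = ((κ̄+3)/(κ̄−1))·√(2π/κ̄)·e^(13/12)`. -/
theorem li1_sub_liStar_le (κ : ℝ) (hκ1 : 1 < κ) (hκe : κ < Real.exp 1)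
    (hsol : κ * (1 - Real.log κ) = 1 / 2) (x : ℝ) (hx : Real.exp 1 ≤ x) :
    liApprox κ (κ * Real.log x - ⌊κ * Real.log x⌋₊) x - liStar x ≤
        liApprox κ 1 x - liStar x ∧
      liApprox κ 1 x - liStar x ≤
        (κ + 3) / (κ - 1) * (Real.sqrt (2 * Real.pi / κ) * Real.exp (13 / 12))
          * Real.sqrt (x / Real.log x) :=
  li1_sub_liStar_le_general κ hκ1 hsol x hx
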